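/- Assume additionally that ψ∘f ∈ L and t ↦ (M − f(t))·(f(t) − m) ∈ L for every continuous ψ : ℝ → ℝ, and for φ three times continuously differentiable on an open interval containing [m,M] define Γ₁(φ) = (M − A(f))/(M − m)·φ(m) + (A(f) − m)/(M − m)·φ(M) − A(φ∘f) − (A((M·1 − f)(f − m·1))/(M − m))·((φ(M) − φ(m))/(M − m) − φ'(m)). Then for any two such functions φ₁, φ₂ with Γ₁(φ₂) ≠ 0 there exists ξ ∈ [m,M] such that Γ₁(φ₁)·φ₂'''(ξ) = Γ₁(φ₂)·φ₁'''(ξ) (i.e. either Γ₁(φ₁)/Γ₁(φ₂) = φ₁'''(ξ)/φ₂'''(ξ) or φ₁'''(ξ) = φ₂'''(ξ) = 0). -/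

import Mathlib

/-!
`Γ₁(φ) = A (R_φ ∘ f)`, where `R_φ = P - φ` and `P` is the quadratic polynomial interpolating
`φ` at `m`, `M` and `φ'` at `m`. If `φ''' ≥ 0` on `[m, M]`, then `(φ - P)'` is convex, vanishes
at `m` and (by Rolle) somewhere in `(m, M)`, so `φ - P` first decreases and then increases
between its zeros `m` and `M`; hence `R_φ ≥ 0` on `[m, M]` and `Γ₁(φ) ≥ 0`.

Any linear functional `Γ` that is nonnegative whenever the third derivative is satisfies a
Cauchy mean value theorem. Put `ψ = Γ(φ₂) φ₁ - Γ(φ₁) φ₂`, so `Γ(ψ) = 0`, and let `p = x³/6`.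
If `μ ≤ ψ''' ≤ ν` on `[m, M]`, positivity applied to `ψ - μ p` and `ν p - ψ` gives
`μ Γ(p) ≤ 0 ≤ ν Γ(p)`. When `Γ(p) > 0`, `ψ'''` changes sign and the intermediate value theorem
gives `ξ`; when `Γ(p) = 0`, the same bounds force `Γ = 0`, contradicting `Γ(φ₂) ≠ 0`.
-/

open Set

section CauchyMeanValue

variable {V K : Type*} [AddCommGroup V] [Module ℝ V] [TopologicalSpace K]
  {Γ : V →ₗ[ℝ] ℝ} {D : V →ₗ[ℝ] C(K, ℝ)} {p : V}

lemma LinearMap.mul_map_le_map_of_forall_le (hΓ : ∀ v, (∀ x, 0 ≤ D v x) → 0 ≤ Γ v) (hp : D p = 1)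
    {v : V} {r : ℝ} (hr : ∀ x, r ≤ D v x) : r * Γ p ≤ Γ v := by
  have := hΓ (v - r • p) fun x => by simpa [hp] using hr x
  simpa using this

lemma LinearMap.map_eq_zero_of_map_eq_zero [CompactSpace K] (hΓ : ∀ v, (∀ x, 0 ≤ D v x) → 0 ≤ Γ v) (hp : D p = 1)
    (h : Γ p = 0) (v : V) : Γ v = 0 := by
  have hbound : ∀ w : V, 0 ≤ Γ w := fun w => by
    simpa [h] using LinearMap.mul_map_le_map_of_forall_le hΓ hp (r := -‖D w‖)
      fun x => neg_le_of_abs_le ((D w).norm_coe_le_norm x)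
  simpa using le_antisymm (by simpa using hbound (-v)) (hbound v)

theorem LinearMap.exists_cauchy_mean_value [CompactSpace K] [Nonempty K] [PreconnectedSpace K]
    (hΓ : ∀ v, (∀ x, 0 ≤ D v x) → 0 ≤ Γ v) (hp : D p = 1) (u w : V) (hw : Γ w ≠ 0) :
    ∃ ξ, Γ u * D w ξ = Γ w * D u ξ := by
  have hΓp : 0 < Γ p := (hΓ p fun x => by simp [hp]).lt_of_ne
    fun h => hw (LinearMap.map_eq_zero_of_map_eq_zero hΓ hp h.symm w)
  set ψ := Γ w • u - Γ u • w
  have hΓψ : Γ ψ = 0 := by simp [ψ, mul_comm]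
  obtain ⟨ξ₁, -, hmin⟩ := isCompact_univ.exists_isMinOn univ_nonempty (D ψ).continuous.continuousOn
  obtain ⟨ξ₂, -, hmax⟩ := isCompact_univ.exists_isMaxOn univ_nonempty (D ψ).continuous.continuousOn
  have h₁ : D ψ ξ₁ ≤ 0 := by
    have := LinearMap.mul_map_le_map_of_forall_le hΓ hp fun x => hmin (mem_univ x)
    nlinarith
  have h₂ : 0 ≤ D ψ ξ₂ := by
    have := LinearMap.mul_map_le_map_of_forall_le hΓ hp (v := -ψ) (r := -D ψ ξ₂) fun x => by
      simpa using hmax (mem_univ x)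
    simp only [map_neg, hΓψ] at this
    nlinarith
  obtain ⟨ξ, hξ⟩ := intermediate_value_univ ξ₁ ξ₂ (D ψ).continuous ⟨h₁, h₂⟩
  refine ⟨ξ, ?_⟩
  simp [ψ] at hξ
  linarith

end CauchyMeanValue

lemma nonpos_of_convexOn_deriv {g g' : ℝ → ℝ} {m M x : ℝ}
    (hg : ∀ y ∈ Icc m M, HasDerivAt g (g' y) y) (hg' : ConvexOn ℝ (Icc m M) g')
    (hgm : g m = 0) (hgM : g M = 0) (hg'm : g' m = 0) (hx : x ∈ Icc m M) : g x ≤ 0 := by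
  rcases hx.1.eq_or_lt with rfl | hmx
  · exact hgm.le
  have hmM : m < M := hmx.trans_le hx.2
  have hcont : ContinuousOn g (Icc m M) := fun y hy => (hg y hy).continuousAt.continuousWithinAt
  obtain ⟨c, hc, hg'c⟩ := exists_hasDerivAt_eq_zero hmM hcont (hgm.trans hgM.symm)
    fun y hy => hg y (Ioo_subset_Icc_self hy)
  have hm : m ∈ Icc m M := left_mem_Icc.2 hmM.le
  have hcM : c ∈ Icc m M := Ioo_subset_Icc_self hc
  have hle : ∀ y ∈ Icc m c, g' y ≤ 0 := fun y hy => by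
    simpa [hg'm, hg'c] using hg'.le_max_of_mem_Icc hm hcM hy
  have hge : ∀ y ∈ Ioo c M, 0 ≤ g' y := fun y hy => by
    have := hg'.slope_mono_adjacent hm (Ioo_subset_Icc_self ⟨hc.1.trans hy.1, hy.2⟩) hc.1 hy.1
    rw [hg'm, hg'c, sub_zero, zero_div, sub_zero] at this
    exact (div_nonneg_iff.1 this).elim (·.1) fun h => absurd h.2 (by linarith [hy.1])
  rcases le_total x c with hxc | hcx
  · have : AntitoneOn g (Icc m c) := by
      refine antitoneOn_of_hasDerivWithinAt_nonpos (f' := g') (convex_Icc m c)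
        (hcont.mono (Icc_subset_Icc_right hcM.2)) (fun y hy => ?_) fun y hy => ?_
      all_goals rw [interior_Icc] at hy
      · exact (hg y ⟨hy.1.le, hy.2.le.trans hcM.2⟩).hasDerivWithinAt
      · exact hle y (Ioo_subset_Icc_self hy)
    simpa [hgm] using this (left_mem_Icc.2 hcM.1) ⟨hx.1, hxc⟩ hx.1
  · have : MonotoneOn g (Icc c M) := by
      refine monotoneOn_of_hasDerivWithinAt_nonneg (f' := g') (convex_Icc c M)
        (hcont.mono (Icc_subset_Icc_left hcM.1)) (fun y hy => ?_) fun y hy => ?_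
      all_goals rw [interior_Icc] at hy
      · exact (hg y ⟨hcM.1.trans hy.1.le, hy.2.le⟩).hasDerivWithinAt
      · exact hge y hy
    simpa [hgM] using this ⟨hcx, hx.2⟩ (right_mem_Icc.2 hcM.2) hx.2

/-- `hermiteRemainder m M φ x = P x - φ x`, where `P` is the quadratic polynomial with
`P m = φ m`, `P' m = φ' m` and `P M = φ M`. -/
noncomputable def hermiteRemainder (m M : ℝ) (φ : ℝ → ℝ) (x : ℝ) : ℝ :=
  (M - x) / (M - m) * φ m + (x - m) / (M - m) * φ M - φ x
    - (M - x) * (x - m) / (M - m) * ((φ M - φ m) / (M - m) - deriv φ m)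

lemma hermiteRemainder_nonneg {φ : ℝ → ℝ} {m M x : ℝ} (hmM : m < M)
    (hφ : ∀ y ∈ Icc m M, DifferentiableAt ℝ φ y) (hφ' : ConvexOn ℝ (Icc m M) (deriv φ))
    (hx : x ∈ Icc m M) : 0 ≤ hermiteRemainder m M φ x := by
  have hMm : M - m ≠ 0 := (sub_pos.2 hmM).ne'
  set k := ((φ M - φ m) / (M - m) - deriv φ m) / (M - m)
  set P : ℝ → ℝ := fun y => φ m + deriv φ m * (y - m) + k * (y - m) ^ 2
  set P' : ℝ → ℝ := fun y => deriv φ m + 2 * k * (y - m)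
  have hP : ∀ y, HasDerivAt P (P' y) y := fun y => by
    have h := ((((hasDerivAt_id y).sub_const m).const_mul (deriv φ m)).const_add (φ m)).add
      ((((hasDerivAt_id y).sub_const m).pow 2).const_mul k)
    exact h.congr_deriv (by simp only [P', id]; ring)
  have hP' : ConcaveOn ℝ (Icc m M) P' :=
    (((LinearMap.mulLeft ℝ (2 * k)).concaveOn (convex_Icc m M)).add_const
      (deriv φ m - 2 * k * m)).congr fun y _ => by simp [P']; ring
  have h := nonpos_of_convexOn_deriv (g := φ - P) (g' := deriv φ - P')
    (fun y hy => (hφ y hy).hasDerivAt.sub (hP y)) (hφ'.sub hP') (by simp [P])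
    (by simp [P, k]; field_simp; ring) (by simp [P']) hx
  have : hermiteRemainder m M φ x = P x - φ x := by
    simp only [hermiteRemainder, P, k]
    field_simp
    ring
  simp only [Pi.sub_apply] at h
  linarith

lemma ContDiffOn.convexOn_deriv {φ : ℝ → ℝ} {U D : Set ℝ} (hφ : ContDiffOn ℝ 3 φ U)
    (hU : IsOpen U) (hD : Convex ℝ D) (hDU : D ⊆ U) (h3 : ∀ x ∈ D, 0 ≤ iteratedDeriv 3 φ x) :
    ConvexOn ℝ D (deriv φ) := by
  have h2 : ContDiffOn ℝ 2 (deriv φ) U := hφ.deriv_of_isOpen hU (by norm_num)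
  have h1 : ContDiffOn ℝ 1 (deriv (deriv φ)) U := h2.deriv_of_isOpen hU (by norm_num)
  refine convexOn_of_deriv2_nonneg hD (h2.continuousOn.mono hDU)
    ((h2.differentiableOn (by norm_num)).mono (interior_subset.trans hDU))
    ((h1.differentiableOn (by norm_num)).mono (interior_subset.trans hDU)) fun x hx => ?_
  simpa [iteratedDeriv_eq_iterate] using h3 x (interior_subset hx)

def contDiffOnSubmodule (n : WithTop ℕ∞) (U : Set ℝ) : Submodule ℝ (ℝ → ℝ) where
  carrier := {φ | ContDiffOn ℝ n φ U}
  add_mem' := ContDiffOn.add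
  zero_mem' := contDiffOn_const
  smul_mem' c _ hφ := hφ.const_smul c

@[simp]
lemma mem_contDiffOnSubmodule {n : WithTop ℕ∞} {U : Set ℝ} {φ : ℝ → ℝ} :
    φ ∈ contDiffOnSubmodule n U ↔ ContDiffOn ℝ n φ U :=
  Iff.rfl

lemma ContDiffOn.continuousOn_iteratedDeriv_of_isOpen {φ : ℝ → ℝ} {U : Set ℝ} {n : ℕ}
    (hφ : ContDiffOn ℝ n φ U) (hU : IsOpen U) : ContinuousOn (iteratedDeriv n φ) U :=
  (hφ.continuousOn_iteratedDerivWithin le_rfl hU.uniqueDiffOn).congr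
    fun _ hx => (iteratedDerivWithin_of_isOpen hU hx).symm

noncomputable def iteratedDerivOn (n : ℕ) {U s : Set ℝ} (hU : IsOpen U) (hsU : s ⊆ U) :
    contDiffOnSubmodule n U →ₗ[ℝ] C(s, ℝ) where
  toFun φ := ⟨s.domRestrict (iteratedDeriv n φ.1),
    ((φ.2 : ContDiffOn ℝ n φ.1 U).continuousOn_iteratedDeriv_of_isOpen hU).mono hsU |>.domRestrict⟩
  map_add' φ ψ := ContinuousMap.ext fun x =>
    iteratedDeriv_add ((φ.2 : ContDiffOn ℝ n φ.1 U).contDiffAt (hU.mem_nhds (hsU x.2)))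
      ((ψ.2 : ContDiffOn ℝ n ψ.1 U).contDiffAt (hU.mem_nhds (hsU x.2)))
  map_smul' c φ := ContinuousMap.ext fun _ => iteratedDeriv_const_smul_field c φ.1

section Gamma

variable {E : Type*} {L : Submodule ℝ (E → ℝ)} {f : E → ℝ} {m M : ℝ} {U : Set ℝ}

abbrev gammaDomain (L : Submodule ℝ (E → ℝ)) (f : E → ℝ) (U : Set ℝ) : Submodule ℝ (ℝ → ℝ) :=
  contDiffOnSubmodule 3 U ⊓ L.comap (LinearMap.funLeft ℝ ℝ f)

noncomputable def gammaOne (A : L →ₗ[ℝ] ℝ) (hfL : f ∈ L)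
    (hKL : (fun t => (M - f t) * (f t - m)) ∈ L) (hU : IsOpen U) (hmU : m ∈ U) :
    gammaDomain L f U →ₗ[ℝ] ℝ where
  toFun φ := (M - A ⟨f, hfL⟩) / (M - m) * φ.1 m + (A ⟨f, hfL⟩ - m) / (M - m) * φ.1 M
      - A ⟨fun t => φ.1 (f t), φ.2.2⟩
      - A ⟨fun t => (M - f t) * (f t - m), hKL⟩ / (M - m)
          * ((φ.1 M - φ.1 m) / (M - m) - deriv φ.1 m)
  map_add' φ ψ := by
    have hA : A ⟨fun t => φ.1 (f t) + ψ.1 (f t), (φ + ψ).2.2⟩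
        = A ⟨fun t => φ.1 (f t), φ.2.2⟩ + A ⟨fun t => ψ.1 (f t), ψ.2.2⟩ := by
      rw [← map_add]; rfl
    have hd : deriv (φ.1 + ψ.1) m = deriv φ.1 m + deriv ψ.1 m :=
      deriv_add ((φ.2.1.contDiffAt (hU.mem_nhds hmU)).differentiableAt (by norm_num))
        ((ψ.2.1.contDiffAt (hU.mem_nhds hmU)).differentiableAt (by norm_num))
    simp only [Submodule.coe_add, Pi.add_apply, hA, hd]
    ring
  map_smul' c φ := by
    have hA : A ⟨fun t => c * φ.1 (f t), (c • φ).2.2⟩ = c * A ⟨fun t => φ.1 (f t), φ.2.2⟩ := by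
      rw [← smul_eq_mul, ← map_smul]; rfl
    have hd : deriv (c • φ.1) m = c * deriv φ.1 m := deriv_const_smul_field c φ.1
    simp only [Submodule.coe_smul, Pi.smul_apply, smul_eq_mul, RingHom.id_apply, hA, hd]
    ring

lemma gammaOne_nonneg_of_hermiteRemainder_nonneg (A : L →ₗ[ℝ] ℝ)
    (hApos : ∀ g : L, (∀ t : E, 0 ≤ g.1 t) → 0 ≤ A g) (h1L : (fun _ : E => (1 : ℝ)) ∈ L)
    (hAnorm : A ⟨fun _ => 1, h1L⟩ = 1) (hfL : f ∈ L)
    (hKL : (fun t => (M - f t) * (f t - m)) ∈ L) (hU : IsOpen U) (hmU : m ∈ U)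
    (φ : gammaDomain L f U) (hφ : ∀ t, 0 ≤ hermiteRemainder m M φ.1 (f t)) :
    0 ≤ gammaOne A hfL hKL hU hmU φ := by
  set C := (φ.1 M - φ.1 m) / (M - m) - deriv φ.1 m
  set u : L := (φ.1 m / (M - m)) • (M • ⟨_, h1L⟩ - ⟨f, hfL⟩)
    + (φ.1 M / (M - m)) • (⟨f, hfL⟩ - m • ⟨_, h1L⟩) - ⟨fun t => φ.1 (f t), φ.2.2⟩
    - (C / (M - m)) • ⟨_, hKL⟩
  have hu : ∀ t, u.1 t = hermiteRemainder m M φ.1 (f t) := fun t => by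
    simp only [u, hermiteRemainder, C, Submodule.coe_sub, Submodule.coe_add, Submodule.coe_smul,
      Pi.sub_apply, Pi.add_apply, Pi.smul_apply, smul_eq_mul]
    ring
  have hAu : A u = gammaOne A hfL hKL hU hmU φ := by
    simp only [u, map_sub, map_add, map_smul, smul_eq_mul, hAnorm]
    simp only [gammaOne, LinearMap.coe_mk, AddHom.coe_mk, C]
    ring
  exact hAu ▸ hApos u fun t => (hu t).symm ▸ hφ t

lemma gammaOne_nonneg (A : L →ₗ[ℝ] ℝ) (hApos : ∀ g : L, (∀ t : E, 0 ≤ g.1 t) → 0 ≤ A g)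
    (h1L : (fun _ : E => (1 : ℝ)) ∈ L) (hAnorm : A ⟨fun _ => 1, h1L⟩ = 1) (hmM : m < M)
    (hfL : f ∈ L) (hfm : ∀ t, m ≤ f t) (hfM : ∀ t, f t ≤ M)
    (hKL : (fun t => (M - f t) * (f t - m)) ∈ L) (hU : IsOpen U) (hIcc : Icc m M ⊆ U)
    (hmU : m ∈ U) (φ : gammaDomain L f U) (hφ : ∀ x ∈ Icc m M, 0 ≤ iteratedDeriv 3 φ.1 x) :
    0 ≤ gammaOne A hfL hKL hU hmU φ := by
  have hconv : ConvexOn ℝ (Icc m M) (deriv φ.1) :=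
    ContDiffOn.convexOn_deriv φ.2.1 hU (convex_Icc m M) hIcc hφ
  refine gammaOne_nonneg_of_hermiteRemainder_nonneg A hApos h1L hAnorm hfL hKL hU hmU φ
    fun t => hermiteRemainder_nonneg hmM ?_ hconv ⟨hfm t, hfM t⟩
  exact fun x hx => (φ.2.1.contDiffAt (hU.mem_nhds (hIcc hx))).differentiableAt (by norm_num)

end Gamma

lemma iteratedDeriv_three_cube_div_six (x : ℝ) : iteratedDeriv 3 (fun y : ℝ => y ^ 3 / 6) x = 1 := by
  have : (fun y : ℝ => y ^ 3 / 6) = (6 : ℝ)⁻¹ • (· ^ 3) := by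
    ext y; simp [div_eq_inv_mul]
  rw [this, iteratedDeriv_const_smul_field, iteratedDeriv_pow]
  norm_num [Nat.descFactorial]

theorem gamma1_cauchy_mean_value_general {E : Type*} (L : Submodule ℝ (E → ℝ))
    (h1L : (fun _ : E => (1 : ℝ)) ∈ L)
    (A : L →ₗ[ℝ] ℝ)
    (hApos : ∀ g : L, (∀ t : E, 0 ≤ g.1 t) → 0 ≤ A g)
    (hAnorm : A ⟨fun _ => 1, h1L⟩ = 1)
    (m M : ℝ) (hmM : m < M)
    (f : E → ℝ) (hfL : f ∈ L) (hfm : ∀ t, m ≤ f t) (hfM : ∀ t, f t ≤ M)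
    (hcomp : ∀ ψ : ℝ → ℝ, Continuous ψ → (fun t => ψ (f t)) ∈ L)
    (hKL : (fun t => (M - f t) * (f t - m)) ∈ L)
    (φ₁ φ₂ : ℝ → ℝ) (a b : ℝ) (ham : a < m) (hMb : M < b)
    (hφ₁ : ContDiffOn ℝ 3 φ₁ (Set.Ioo a b))
    (hφ₂ : ContDiffOn ℝ 3 φ₂ (Set.Ioo a b))
    (hφ₁fL : (fun t => φ₁ (f t)) ∈ L)
    (hφ₂fL : (fun t => φ₂ (f t)) ∈ L)
    (hΓ₂ : (M - A ⟨f, hfL⟩) / (M - m) * φ₂ m + (A ⟨f, hfL⟩ - m) / (M - m) * φ₂ M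
          - A ⟨fun t => φ₂ (f t), hφ₂fL⟩
          - A ⟨fun t => (M - f t) * (f t - m), hKL⟩ / (M - m)
              * ((φ₂ M - φ₂ m) / (M - m) - deriv φ₂ m) ≠ 0) :
    ∃ ξ ∈ Set.Icc m M,
      ((M - A ⟨f, hfL⟩) / (M - m) * φ₁ m + (A ⟨f, hfL⟩ - m) / (M - m) * φ₁ M
          - A ⟨fun t => φ₁ (f t), hφ₁fL⟩
          - A ⟨fun t => (M - f t) * (f t - m), hKL⟩ / (M - m)
              * ((φ₁ M - φ₁ m) / (M - m) - deriv φ₁ m)) * iteratedDeriv 3 φ₂ ξ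
        = ((M - A ⟨f, hfL⟩) / (M - m) * φ₂ m + (A ⟨f, hfL⟩ - m) / (M - m) * φ₂ M
          - A ⟨fun t => φ₂ (f t), hφ₂fL⟩
          - A ⟨fun t => (M - f t) * (f t - m), hKL⟩ / (M - m)
              * ((φ₂ M - φ₂ m) / (M - m) - deriv φ₂ m)) * iteratedDeriv 3 φ₁ ξ := by
  have hIcc : Icc m M ⊆ Ioo a b := Icc_subset_Ioo ham hMb
  have hmU : m ∈ Ioo a b := hIcc (left_mem_Icc.2 hmM.le)
  have : Nonempty (Icc m M) := ⟨⟨m, left_mem_Icc.2 hmM.le⟩⟩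
  have : PreconnectedSpace (Icc m M) := Subtype.preconnectedSpace isPreconnected_Icc
  let cube : gammaDomain L f (Ioo a b) :=
    ⟨fun y => y ^ 3 / 6, Submodule.mem_inf.2 ⟨mem_contDiffOnSubmodule.2 (by fun_prop),
      Submodule.mem_comap.2 (hcomp (fun y => y ^ 3 / 6) (by fun_prop))⟩⟩
  obtain ⟨ξ, hξ⟩ := LinearMap.exists_cauchy_mean_value (p := cube)
    (Γ := gammaOne A hfL hKL isOpen_Ioo hmU)
    (D := iteratedDerivOn 3 isOpen_Ioo hIcc ∘ₗ Submodule.inclusion inf_le_left)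
    (fun φ hφ => gammaOne_nonneg A hApos h1L hAnorm hmM hfL hfm hfM hKL isOpen_Ioo hIcc hmU φ
      fun x hx => hφ ⟨x, hx⟩)
    (ContinuousMap.ext fun x => iteratedDeriv_three_cube_div_six x)
    ⟨φ₁, hφ₁, hφ₁fL⟩ ⟨φ₂, hφ₂, hφ₂fL⟩ hΓ₂
  exact ⟨ξ, ξ.2, hξ⟩

/-- Mean value theorem of Cauchy type for the functional Γ₁
(Theorem 6.2 of the paper). -/
theorem gamma1_cauchy_mean_value {E : Type*} [Nonempty E] (L : Submodule ℝ (E → ℝ))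
    (h1L : (fun _ : E => (1 : ℝ)) ∈ L)
    (A : L →ₗ[ℝ] ℝ)
    (hApos : ∀ g : L, (∀ t : E, 0 ≤ g.1 t) → 0 ≤ A g)
    (hAnorm : A ⟨fun _ => 1, h1L⟩ = 1)
    (m M : ℝ) (hmM : m < M)
    (f : E → ℝ) (hfL : f ∈ L) (hfm : ∀ t, m ≤ f t) (hfM : ∀ t, f t ≤ M)
    (hcomp : ∀ ψ : ℝ → ℝ, Continuous ψ → (fun t => ψ (f t)) ∈ L)
    (hKL : (fun t => (M - f t) * (f t - m)) ∈ L)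
    (φ₁ φ₂ : ℝ → ℝ) (a b : ℝ) (ham : a < m) (hMb : M < b)
    (hφ₁ : ContDiffOn ℝ 3 φ₁ (Set.Ioo a b))
    (hφ₂ : ContDiffOn ℝ 3 φ₂ (Set.Ioo a b))
    (hφ₁fL : (fun t => φ₁ (f t)) ∈ L)
    (hφ₂fL : (fun t => φ₂ (f t)) ∈ L)
    (hΓ₂ : (M - A ⟨f, hfL⟩) / (M - m) * φ₂ m + (A ⟨f, hfL⟩ - m) / (M - m) * φ₂ M
          - A ⟨fun t => φ₂ (f t), hφ₂fL⟩
          - A ⟨fun t => (M - f t) * (f t - m), hKL⟩ / (M - m)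
              * ((φ₂ M - φ₂ m) / (M - m) - deriv φ₂ m) ≠ 0) :
    ∃ ξ ∈ Set.Icc m M,
      ((M - A ⟨f, hfL⟩) / (M - m) * φ₁ m + (A ⟨f, hfL⟩ - m) / (M - m) * φ₁ M
          - A ⟨fun t => φ₁ (f t), hφ₁fL⟩
          - A ⟨fun t => (M - f t) * (f t - m), hKL⟩ / (M - m)
              * ((φ₁ M - φ₁ m) / (M - m) - deriv φ₁ m)) * iteratedDeriv 3 φ₂ ξ
        = ((M - A ⟨f, hfL⟩) / (M - m) * φ₂ m + (A ⟨f, hfL⟩ - m) / (M - m) * φ₂ M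
          - A ⟨fun t => φ₂ (f t), hφ₂fL⟩
          - A ⟨fun t => (M - f t) * (f t - m), hKL⟩ / (M - m)
              * ((φ₂ M - φ₂ m) / (M - m) - deriv φ₂ m)) * iteratedDeriv 3 φ₁ ξ :=
  gamma1_cauchy_mean_value_general L h1L A hApos hAnorm m M hmM f hfL hfm hfM hcomp hKL φ₁ φ₂ a b
    ham hMb hφ₁ hφ₂ hφ₁fL hφ₂fL hΓ₂
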